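/- Let (P, ≼, ∧) be a locally finite meet semilattice with least element 0̂, let f be a real-valued function on P, and let S = {x_1, …, x_n} be a finite meet closed subset of P with distinct elements, indexed so that x_i ≼ x_j only if i ≤ j. Then the meet matrix (S)_f is positive semidefinite if and only if d_i = ∑_{z ≼ x_i, z ⋠ x_j for all j < i} (f_d * μ)(0̂, z) ≥ 0 for all i ∈ {1, …, n}, and (S)_f is positive definite if and only if d_i > 0 for all i ∈ {1, …, n}. -/

import Mathlib

/-!
Write `g z = ∑_{w ≤ z} f w μ(w, z)`, so that Möbius inversion gives `f y = ∑_{z ≤ y} g z`.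
Every `z ≤ x m` has a first index `k` with `z ≤ x k`, and meet closedness forces `x k ≤ x m`
(the meet `x k ⊓ x m` is some `x l` with `l ≤ k`, and minimality of `k` gives `l = k`).
Grouping `z` by this first index turns the inversion formula into
`f (x i ⊓ x j) = ∑_{x k ≤ x i, x k ≤ x j} d k`, i.e. `(S)_f = E * diag d * Eᵀ` for the
restricted zeta matrix `E`, which is unitriangular. Congruence by an invertible matrix
preserves (semi)definiteness, so everything reduces to the diagonal matrix `diag d`.
-/

open Matrix Finset

section Moebius

variable {P R : Type*} [PartialOrder P] [LocallyFiniteOrder P] [Ring R] {mu : P → P → R}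

theorem sum_Icc_moebius_eq_zero
    (hmu_lt : ∀ p q : P, p < q → mu p q = -∑ r ∈ Ico p q, mu p r) {w y : P} (hwy : w < y) :
    ∑ z ∈ Icc w y, mu w z = 0 := by
  classical
  rw [← Ico_insert_right hwy.le, sum_insert right_notMem_Ico, hmu_lt w y hwy, neg_add_cancel]

theorem sum_Icc_sum_Icc_mul_moebius (hmu_self : ∀ p, mu p p = 1)
    (hmu_lt : ∀ p q : P, p < q → mu p q = -∑ r ∈ Ico p q, mu p r) (f : P → R) {a y : P}
    (hay : a ≤ y) :
    ∑ z ∈ Icc a y, ∑ w ∈ Icc a z, f w * mu w z = f y := by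
  calc ∑ z ∈ Icc a y, ∑ w ∈ Icc a z, f w * mu w z
      = ∑ w ∈ Icc a y, f w * ∑ z ∈ Icc w y, mu w z := by
        simp_rw [mul_sum]
        refine sum_comm' fun z w => ?_
        simp only [mem_Icc]
        exact ⟨fun ⟨⟨_, hzy⟩, haw, hwz⟩ => ⟨⟨hwz, hzy⟩, haw, hwz.trans hzy⟩,
          fun ⟨⟨hwz, hzy⟩, haw, _⟩ => ⟨⟨haw.trans hwz, hzy⟩, haw, hwz⟩⟩
    _ = f y * ∑ z ∈ Icc y y, mu y z := by
        refine sum_eq_single_of_mem y (right_mem_Icc.2 hay) fun w hw hwy => ?_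
        rw [sum_Icc_moebius_eq_zero hmu_lt ((mem_Icc.1 hw).2.lt_of_ne hwy), mul_zero]
    _ = f y := by rw [Icc_self, sum_singleton, hmu_self, mul_one]

end Moebius

section MeetClosed

variable {P ι : Type*} [SemilatticeInf P] [OrderBot P] [LocallyFiniteOrder P]
  [DecidableRel ((· ≤ ·) : P → P → Prop)] [LinearOrder ι] [Fintype ι] {x : ι → P}

def firstIndexFiber (x : ι → P) (k : ι) : Finset P :=
  (Icc ⊥ (x k)).filter (fun z => ∀ j, j < k → ¬ z ≤ x j)

theorem le_of_mem_firstIndexFiber {z : P} {k : ι} (hz : z ∈ firstIndexFiber x k) : z ≤ x k :=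
  (mem_Icc.1 (mem_filter.1 hz).1).2

theorem index_le_of_mem_firstIndexFiber {z : P} {j k : ι} (hz : z ∈ firstIndexFiber x k)
    (hzj : z ≤ x j) : k ≤ j :=
  not_lt.1 fun hjk => (mem_filter.1 hz).2 j hjk hzj

theorem exists_mem_firstIndexFiber {z : P} {m : ι} (hzm : z ≤ x m) :
    ∃ k, z ∈ firstIndexFiber x k := by
  obtain ⟨k, hk, hmin⟩ := (univ.filter fun k => z ≤ x k).exists_min_image id
    ⟨m, mem_filter.2 ⟨mem_univ m, hzm⟩⟩
  refine ⟨k, mem_filter.2 ⟨mem_Icc.2 ⟨bot_le, (mem_filter.1 hk).2⟩, fun j hjk hzj => ?_⟩⟩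
  exact (hmin j (mem_filter.2 ⟨mem_univ j, hzj⟩)).not_gt hjk

theorem le_of_mem_firstIndexFiber_of_le (hord : ∀ i j, x i ≤ x j → i ≤ j)
    (hmeet : ∀ i j, ∃ k, x k = x i ⊓ x j) {z : P} {k m : ι}
    (hz : z ∈ firstIndexFiber x k) (hzm : z ≤ x m) : x k ≤ x m := by
  obtain ⟨l, hl⟩ := hmeet k m
  have hkl : k ≤ l :=
    index_le_of_mem_firstIndexFiber hz (hl ▸ le_inf (le_of_mem_firstIndexFiber hz) hzm)
  have hlk : l ≤ k := hord l k (hl ▸ inf_le_left)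
  rw [← le_antisymm hlk hkl, hl]
  exact inf_le_right

theorem sum_Icc_bot_eq_sum_firstIndexFiber {M : Type*} [AddCommMonoid M]
    (hord : ∀ i j, x i ≤ x j → i ≤ j) (hmeet : ∀ i j, ∃ k, x k = x i ⊓ x j) (g : P → M)
    (m : ι) :
    ∑ z ∈ Icc ⊥ (x m), g z = ∑ k ∈ univ.filter (fun k => x k ≤ x m),
      ∑ z ∈ firstIndexFiber x k, g z := by
  classical
  rw [← sum_biUnion]
  · congr 1
    ext z
    simp only [mem_biUnion, mem_filter, mem_univ, true_and, mem_Icc, bot_le]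
    constructor
    · intro hzm
      obtain ⟨k, hz⟩ := exists_mem_firstIndexFiber hzm
      exact ⟨k, le_of_mem_firstIndexFiber_of_le hord hmeet hz hzm, hz⟩
    · rintro ⟨k, hkm, hz⟩
      exact (le_of_mem_firstIndexFiber hz).trans hkm
  · intro k _ l _ hkl
    refine disjoint_left.2 fun z hzk hzl => hkl (le_antisymm ?_ ?_)
    · exact index_le_of_mem_firstIndexFiber hzk (le_of_mem_firstIndexFiber hzl)
    · exact index_le_of_mem_firstIndexFiber hzl (le_of_mem_firstIndexFiber hzk)

end MeetClosed

def zetaMatrix {P ι R : Type*} [LE P] [DecidableRel ((· ≤ ·) : P → P → Prop)] [Zero R] [One R]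
    (x : ι → P) : Matrix ι ι R :=
  of fun i k => if x k ≤ x i then 1 else 0

theorem det_zetaMatrix {P ι R : Type*} [Preorder P] [DecidableRel ((· ≤ ·) : P → P → Prop)]
    [LinearOrder ι] [Fintype ι] [CommRing R] {x : ι → P} (hord : ∀ i j, x i ≤ x j → i ≤ j) :
    (zetaMatrix x : Matrix ι ι R).det = 1 := by
  have hlower : (zetaMatrix x : Matrix ι ι R).IsLowerTriangular := fun i k hik =>
    if_neg fun hki => (hord k i hki).not_gt hik
  rw [det_of_isLowerTriangular _ hlower]
  simp [zetaMatrix]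

theorem meetMatrix_eq_zetaMatrix_mul_diagonal_mul_transpose {P ι R : Type*} [SemilatticeInf P]
    [DecidableRel ((· ≤ ·) : P → P → Prop)] [Fintype ι] [DecidableEq ι] [Semiring R]
    {x : ι → P} (hmeet : ∀ i j, ∃ k, x k = x i ⊓ x j) {f : P → R} {d : ι → R}
    (hsum : ∀ m, f (x m) = ∑ k ∈ univ.filter (fun k => x k ≤ x m), d k) :
    of (fun i j => f (x i ⊓ x j)) = zetaMatrix x * diagonal d * (zetaMatrix x)ᵀ := by
  ext i j
  obtain ⟨m, hm⟩ := hmeet i j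
  rw [of_apply, ← hm, hsum m, hm, sum_filter, mul_apply]
  refine sum_congr rfl fun k _ => ?_
  simp only [mul_diagonal, transpose_apply, zetaMatrix, of_apply, le_inf_iff]
  split_ifs <;> simp_all

theorem meet_matrix_posSemidef_posDef_iff_general
    {P : Type*} [SemilatticeInf P] [OrderBot P] [LocallyFiniteOrder P]
    [DecidableRel ((· ≤ ·) : P → P → Prop)]
    (mu : P → P → ℝ)
    (hmu_self : ∀ p, mu p p = 1)
    (hmu_lt : ∀ p q : P, p < q → mu p q = -∑ r ∈ Finset.Ico p q, mu p r)
    (f : P → ℝ)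
    {n : ℕ} (x : Fin n → P)
    (hord : ∀ i j, x i ≤ x j → i ≤ j)
    (hmeet : ∀ i j, ∃ k, x k = x i ⊓ x j)
    (d : Fin n → ℝ)
    (hd : ∀ i, d i = ∑ z ∈ (Finset.Icc ⊥ (x i)).filter
        (fun z => ∀ j, j < i → ¬ z ≤ x j),
      ∑ w ∈ Finset.Icc ⊥ z, f w * mu w z) :
    ((Matrix.of fun i j => f (x i ⊓ x j)).PosSemidef ↔ ∀ i, 0 ≤ d i) ∧
      ((Matrix.of fun i j => f (x i ⊓ x j)).PosDef ↔ ∀ i, 0 < d i) := by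
  have hsum : ∀ m, f (x m) = ∑ k ∈ univ.filter (fun k => x k ≤ x m), d k := fun m => by
    rw [← sum_Icc_sum_Icc_mul_moebius hmu_self hmu_lt f bot_le,
      sum_Icc_bot_eq_sum_firstIndexFiber hord hmeet]
    exact sum_congr rfl fun k _ => by
      -- the two filters differ only in the instances through which `<` on `Fin n` is elaborated
      unfold firstIndexFiber
      convert (hd k).symm
  have hunit : IsUnit (zetaMatrix x : Matrix (Fin n) (Fin n) ℝ) := by
    rw [isUnit_iff_isUnit_det, det_zetaMatrix hord]
    exact isUnit_one
  rw [meetMatrix_eq_zetaMatrix_mul_diagonal_mul_transpose hmeet hsum,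
    ← conjTranspose_eq_transpose_of_trivial, ← star_eq_conjTranspose,
    hunit.posSemidef_star_right_conjugate_iff, hunit.posDef_star_right_conjugate_iff]
  exact ⟨posSemidef_diagonal_iff, posDef_diagonal_iff⟩

/-- For a real-valued `f` on a locally finite meet semilattice with least
element and a meet closed set `S`, the meet matrix `(S)_f` is positive semidefinite iff all
`d i ≥ 0`, and positive definite iff all `d i > 0`, where
`d i = ∑_{z ≼ x i, z ⋠ x j for j < i} (f_d * μ)(⊥, z)`. -/
theorem meet_matrix_posSemidef_posDef_iff
    {P : Type*} [SemilatticeInf P] [OrderBot P] [LocallyFiniteOrder P]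
    [DecidableRel ((· ≤ ·) : P → P → Prop)]
    (mu : P → P → ℝ)
    (hmu_self : ∀ p, mu p p = 1)
    (hmu_lt : ∀ p q : P, p < q → mu p q = -∑ r ∈ Finset.Ico p q, mu p r)
    (hmu_nle : ∀ p q : P, ¬ p ≤ q → mu p q = 0)
    (f : P → ℝ)
    {n : ℕ} (x : Fin n → P) (hinj : Function.Injective x)
    (hord : ∀ i j, x i ≤ x j → i ≤ j)
    (hmeet : ∀ i j, ∃ k, x k = x i ⊓ x j)
    (d : Fin n → ℝ)
    (hd : ∀ i, d i = ∑ z ∈ (Finset.Icc ⊥ (x i)).filter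
        (fun z => ∀ j, j < i → ¬ z ≤ x j),
      ∑ w ∈ Finset.Icc ⊥ z, f w * mu w z) :
    ((Matrix.of fun i j => f (x i ⊓ x j)).PosSemidef ↔ ∀ i, 0 ≤ d i) ∧
      ((Matrix.of fun i j => f (x i ⊓ x j)).PosDef ↔ ∀ i, 0 < d i) :=
  meet_matrix_posSemidef_posDef_iff_general mu hmu_self hmu_lt f x hord hmeet d hd
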